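/- Let M be a biclosed poset, with the of-course modality on dialectica Lambek spaces defined using lists. If (f, F) is a dialectica morphism from (U,X,α) to (V,Y,β), then the pair consisting of f : U → V and the map (V → List Y) → (U → List X) sending g to λu. List.map F (g (f u)) is a dialectica morphism from !(U,X,α) to !(V,Y,β); i.e., ! is functorial. -/
import Mathlib


/-- A biclosed poset: a partially ordered monoid with left and right
pseudocomplements adjoint to the multiplication. -/
structure BiclosedPoset (M : Type*) [PartialOrder M] where
  mul : M → M → M
  e : M
  mul_assoc : ∀ a b c, mul (mul a b) c = mul a (mul b c)
  e_mul : ∀ a, mul e a = a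
  mul_e : ∀ a, mul a e = a
  lpc : M → M → M  -- a ⇀ b
  rpc : M → M → M  -- b ↼ a
  lpc_adj : ∀ a b x, mul a x ≤ b ↔ x ≤ lpc a b
  rpc_adj : ∀ a b x, mul x a ≤ b ↔ x ≤ rpc b a

/-- A dialectica Lambek space over `M` is given by sets `U`, `X` and a
relation `α : U × X → M`; a pair `(f, F)` is a dialectica morphism from
`(U, X, α)` to `(V, Y, β)` when `α (u, F y) ≤ β (f u, y)` for all `u`, `y`. -/
def IsDialMorph {M : Type*} [PartialOrder M] {U X V Y : Type*}
    (α : U × X → M) (β : V × Y → M) (f : U → V) (F : Y → X) : Prop :=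
  ∀ u y, α (u, F y) ≤ β (f u, y)

/-- The relation of the of-course modality `!(U,X,α) = (U, U → List X, !α)`,
where `(!α)(u, f)` is the ordered product of `α(u, xᵢ)` over `f u = [x₁,…,xₙ]`
(empty product `e`). -/
def bangRel {M : Type*} [PartialOrder M] (B : BiclosedPoset M)
    {U X : Type*} (α : U × X → M) : U × (U → List X) → M :=
  fun p => ((p.2 p.1).map (fun x => α (p.1, x))).foldr B.mul B.e

lemma BiclosedPoset.mul_mono {M : Type*} [PartialOrder M] (B : BiclosedPoset M)
    {a b c d : M} (h1 : a ≤ b) (h2 : c ≤ d) : B.mul a c ≤ B.mul b d := by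
  have h3 : B.mul a c ≤ B.mul b c :=
    (B.rpc_adj c (B.mul b c) a).mpr (h1.trans ((B.rpc_adj c (B.mul b c) b).mp le_rfl))
  exact h3.trans ((B.lpc_adj b (B.mul b d) c).mpr
    (h2.trans ((B.lpc_adj b (B.mul b d) d).mp le_rfl)))

/-- Functoriality of the of-course modality: if `(f, F)` is a dialectica
morphism from `(U,X,α)` to `(V,Y,β)`, then the pair consisting of `f` and
`g ↦ λu. List.map F (g (f u))` is a dialectica morphism from `!(U,X,α)` to
`!(V,Y,β)`. -/
theorem bang_functorial {M : Type*} [PartialOrder M] (B : BiclosedPoset M)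
    {U X V Y : Type*} (α : U × X → M) (β : V × Y → M)
    (f : U → V) (F : Y → X) (hf : IsDialMorph α β f F) :
    IsDialMorph (bangRel B α) (bangRel B β) f
      (fun g => fun u => List.map F (g (f u))) := by
  intro u g
  simp only [bangRel, List.map_map]
  induction g (f u) with
  | nil => exact le_rfl
  | cons y t ih => exact B.mul_mono (hf u y) ih
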